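/- arXiv:1004.4288 — 4 statements merged into one kernel-verified Lean document; each statement's English description precedes it below -/
import Mathlib

section
/- Let G be a Lie group acting freely and properly on a manifold Q so that π : Q → Q/G is a principal bundle, and let A_d : Q × Q → G be the discrete connection 1-form of an affine discrete connection. Then for all (q₀,q₁) in the domain and all g₀, g₁ ∈ G, A_d(g₀·q₀, g₁·q₁) = g₁ · A_d(q₀,q₁) · g₀⁻¹. -/
/-- Equivariance of the discrete connection 1-form of an affine
discrete connection: `A_d(g₀·q₀, g₁·q₁) = g₁ * A_d(q₀,q₁) * g₀⁻¹`.
The affine discrete connection is encoded by its `G`-invariant horizontal set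
`Hor ⊂ Q × Q`, and `Ad` is its discrete connection 1-form: `Ad (q₀,q₁)` is the
unique `g ∈ G` with `(q₀, g⁻¹ • q₁) ∈ Hor`. -/
theorem discrete_connection_form_equivariant
    {Q G : Type*} [Group G] [MulAction G Q]
    (Hor : Set (Q × Q))
    (hInv : ∀ (g : G) (p : Q × Q), p ∈ Hor → ((g • p.1, g • p.2) : Q × Q) ∈ Hor)
    (Ad : Q × Q → G)
    (hHor : ∀ p : Q × Q, ((p.1, (Ad p)⁻¹ • p.2) : Q × Q) ∈ Hor)
    (hUniq : ∀ (p : Q × Q) (g : G), ((p.1, g⁻¹ • p.2) : Q × Q) ∈ Hor → g = Ad p)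
    (q₀ q₁ : Q) (g₀ g₁ : G) :
    Ad (g₀ • q₀, g₁ • q₁) = g₁ * Ad (q₀, q₁) * g₀⁻¹ := by
  symm
  apply hUniq (g₀ • q₀, g₁ • q₁)
  have h := hInv g₀ _ (hHor (q₀, q₁))
  have key : (g₁ * Ad (q₀, q₁) * g₀⁻¹)⁻¹ • (g₁ • q₁) = g₀ • ((Ad (q₀, q₁))⁻¹ • q₁) := by
    rw [smul_smul, smul_smul]
    congr 1
    group
  rw [key]
  exact h
end

section
/- Let G be a horizontal symmetry group of a discrete mechanical system with discrete Lagrangian L_d that is both regular and G-regular, and momentum map J_d(q₀,q₁)(ξ) = −D₁L_d(q₀,q₁)(ξ_Q(q₀)). Then for all q₀ ∈ Q, μ ∈ 𝔤*, and q₁ in the intersection of the orbit G·q₀ with (J_d^{q₀})⁻¹(μ), one has the direct sum decomposition T_{q₁}Q = T_{q₁}(G·q₀) ⊕ T_{q₁}(J_d^{q₀})⁻¹(μ). -/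
/-!
Let `B = D₂D₁L(q₀, q₁)` and `V(q) = T_q(G·q)`. The differential of `J_d^{q₀}` at `q₁` is
`X ↦ -B(·, X)` restricted to `V(q₀)`, so the tangent space of the level set is the
`B`-annihilator of `V(q₀)`, of codimension at most `dim V(q₀)`. G-regularity makes `B` pair
`V(q₀)` injectively into `V(q₁)*`; applied at `(q₁, q₀)` as well it gives
`dim V(q₁) ≤ dim V(q₀)`, so the pairing is perfect. Hence `V(q₁)` meets the annihilator
only in `0`, and counting dimensions the two are complementary.
-/

open scoped Manifold

open Module

namespace LinearMap

variable {K V₁ V₂ : Type*} [Field K] [AddCommGroup V₁] [Module K V₁] [AddCommGroup V₂]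
  [Module K V₂]

theorem SeparatingRight.finrank_le [FiniteDimensional K V₁] {P : V₁ →ₗ[K] V₂ →ₗ[K] K}
    (h : P.SeparatingRight) : finrank K V₂ ≤ finrank K V₁ :=
  (P.flip.finrank_le_finrank_of_injective
    (ker_eq_bot.mp (separatingRight_iff_flip_ker_eq_bot.mp h))).trans_eq
    Subspace.dual_finrank_eq

theorem SeparatingRight.separatingLeft [FiniteDimensional K V₁] [FiniteDimensional K V₂]
    {P : V₁ →ₗ[K] V₂ →ₗ[K] K} (h : P.SeparatingRight)
    (hdim : finrank K V₁ ≤ finrank K V₂) : P.SeparatingLeft := by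
  rw [separatingLeft_iff_ker_eq_bot, ker_eq_bot, ← flip_surjective_iff₁,
    ← injective_iff_surjective_of_finrank_eq_finrank
      ((h.finrank_le.antisymm hdim).trans Subspace.dual_finrank_eq.symm)]
  exact ker_eq_bot.mp (separatingRight_iff_flip_ker_eq_bot.mp h)

variable {B : V₁ →ₗ[K] V₂ →ₗ[K] K} {S : Submodule K V₂} {T : Submodule K V₁}

theorem finrank_le_add_finrank_comap_dualAnnihilator [FiniteDimensional K V₁]
    [FiniteDimensional K V₂] (f : V₁ →ₗ[K] Dual K V₂) :
    finrank K V₁ ≤ finrank K S + finrank K (S.dualAnnihilator.comap f) := by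
  rw [← S.dualRestrict_ker_eq_dualAnnihilator, ← ker_comp,
    ← (S.dualRestrict ∘ₗ f).finrank_range_add_finrank_ker]
  gcongr
  exact (Submodule.finrank_le _).trans_eq Subspace.dual_finrank_eq

theorem isCompl_comap_dualAnnihilator [FiniteDimensional K V₁] [FiniteDimensional K V₂]
    (h : (B.domRestrict₁₂ T S).SeparatingRight) (hdim : finrank K T ≤ finrank K S) :
    IsCompl T (S.dualAnnihilator.comap B) := by
  refine (Submodule.isCompl_iff_disjoint _ _ ?_).mpr ?_
  · exact h.finrank_le.antisymm hdim ▸ finrank_le_add_finrank_comap_dualAnnihilator B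
  · rw [Submodule.disjoint_def]
    intro x hxT hxB
    simpa using h.separatingLeft hdim ⟨x, hxT⟩ fun u =>
      (Submodule.mem_dualAnnihilator _).mp hxB u u.2

end LinearMap

section

variable {𝕜 : Type*} [NontriviallyNormedField 𝕜]
  {E : Type*} [NormedAddCommGroup E] [NormedSpace 𝕜 E] {H : Type*} [TopologicalSpace H]
  {I : ModelWithCorners 𝕜 E H} {M : Type*} [TopologicalSpace M] [ChartedSpace H M]
  {E' : Type*} [NormedAddCommGroup E'] [NormedSpace 𝕜 E'] {H' : Type*} [TopologicalSpace H']
  {J : ModelWithCorners 𝕜 E' H'} {N : Type*} [TopologicalSpace N] [ChartedSpace H' N]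
  {F : Type*} [NormedAddCommGroup F] [NormedSpace 𝕜 F]

variable (I) in
noncomputable def partialMfderivFst (f : M × N → F) (x : M) (y : N) : E →L[𝕜] F :=
  mfderiv I 𝓘(𝕜, F) (fun x' => f (x', y)) x

theorem ContMDiff.contMDiff_partialMfderivFst [IsManifold I 1 M] [IsManifold J 1 N]
    {m n : WithTop ℕ∞} {f : M × N → F} (hf : ContMDiff (I.prod J) 𝓘(𝕜, F) n f)
    (hmn : m + 1 ≤ n) (x : M) :
    ContMDiff J 𝓘(𝕜, E →L[𝕜] F) m (partialMfderivFst I f x) := by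
  intro y
  have hf' : ContMDiffAt (J.prod I) 𝓘(𝕜, F) n
      (Function.uncurry fun (y : N) (x' : M) => f (x', y)) (y, x) :=
    (hf.comp (contMDiff_snd.prodMk contMDiff_fst)).contMDiffAt
  refine (hf'.mfderiv _ (fun _ => x) contMDiffAt_const hmn).congr_of_eventuallyEq
    (Filter.Eventually.of_forall fun y' => ?_)
  -- the base point is constant, so the coordinate change in `inTangentCoordinates` is trivial
  erw [inTangentCoordinates_eq _ _ _ (mem_chart_source H x) (Set.mem_univ _),
    tangentBundleCore_coordChange_model_space]
  ext v
  erw [ContinuousLinearMap.comp_apply, ContinuousLinearMap.comp_apply,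
    (tangentBundleCore I M).coordChange_self (achart H x) x (mem_chart_source H x) v]
  rfl

variable (I J) in
/-- `D₂D₁f(x, y)`. -/
noncomputable def mixedMfderiv (f : M × N → F) (x : M) (y : N) :
    TangentSpace J y →L[𝕜] TangentSpace I x →L[𝕜] F :=
  mfderiv J 𝓘(𝕜, E →L[𝕜] F) (partialMfderivFst I f x) y

theorem MDifferentiableAt.mfderiv_clm_apply_const {Φ : N → E →L[𝕜] F} {y : N}
    (hΦ : MDifferentiableAt J 𝓘(𝕜, E →L[𝕜] F) Φ y) (v : E) :
    mfderiv J 𝓘(𝕜, F) (fun y => Φ y v) y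
      = (ContinuousLinearMap.apply 𝕜 F v).comp (mfderiv J 𝓘(𝕜, E →L[𝕜] F) Φ y) := by
  change mfderiv J 𝓘(𝕜, F) (ContinuousLinearMap.apply 𝕜 F v ∘ Φ) y = _
  rw [mfderiv_comp y (ContinuousLinearMap.apply 𝕜 F v).mdifferentiableAt hΦ,
    ContinuousLinearMap.mfderiv_eq]
  rfl

variable (I J) in
noncomputable def verticalSpace {G : Type*} [TopologicalSpace G] [ChartedSpace H' G] [Monoid G]
    [MulAction G M] (x : M) : Submodule 𝕜 (TangentSpace I x) :=
  LinearMap.range (mfderiv J I (fun g : G => g • x) 1).toLinearMap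

theorem ker_mfderiv_of_eq_neg_comp {G : Type*} [NormedAddCommGroup G] [NormedSpace 𝕜 G]
    {f : N → G →L[𝕜] 𝕜} {Φ : N → E →L[𝕜] 𝕜} {A : G →L[𝕜] E} (hf : ∀ y, f y = -(Φ y).comp A)
    {y : N} (hΦ : MDifferentiableAt J 𝓘(𝕜, E →L[𝕜] 𝕜) Φ y) :
    LinearMap.ker (mfderiv J 𝓘(𝕜, G →L[𝕜] 𝕜) f y).toLinearMap
      = (LinearMap.range A.toLinearMap).dualAnnihilator.comap
          (mfderiv J 𝓘(𝕜, E →L[𝕜] 𝕜) Φ y).toLinearMap₁₂ := by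
  set Ψ : (E →L[𝕜] 𝕜) →L[𝕜] G →L[𝕜] 𝕜 := -(ContinuousLinearMap.compL 𝕜 G E 𝕜).flip A
  set D : TangentSpace J y →L[𝕜] E →L[𝕜] 𝕜 := mfderiv J 𝓘(𝕜, E →L[𝕜] 𝕜) Φ y
  have hΨ : mfderiv J 𝓘(𝕜, G →L[𝕜] 𝕜) f y = Ψ.comp D := by
    obtain rfl : f = Ψ ∘ Φ := funext hf
    change mfderiv J 𝓘(𝕜, G →L[𝕜] 𝕜) (Ψ ∘ Φ) y = _
    rw [mfderiv_comp y Ψ.mdifferentiableAt hΦ, ContinuousLinearMap.mfderiv_eq]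
    rfl
  ext X
  rw [LinearMap.mem_ker, Submodule.mem_comap, Submodule.mem_dualAnnihilator, hΨ]
  change -((D X).comp A) = 0 ↔ ∀ w ∈ LinearMap.range A.toLinearMap, D X w = 0
  simp [ContinuousLinearMap.ext_iff]

end

theorem orbit_level_set_complementary_general
    {EG : Type*} [NormedAddCommGroup EG] [NormedSpace ℝ EG]
    {HG : Type*} [TopologicalSpace HG] (IG : ModelWithCorners ℝ EG HG)
    {G : Type*} [TopologicalSpace G] [ChartedSpace HG G] [Group G]
    {EQ : Type*} [NormedAddCommGroup EQ] [NormedSpace ℝ EQ]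
    [FiniteDimensional ℝ EQ]
    {HQ : Type*} [TopologicalSpace HQ] (IQ : ModelWithCorners ℝ EQ HQ)
    {Q : Type*} [TopologicalSpace Q] [ChartedSpace HQ Q]
    [IsManifold IQ (⊤ : ℕ∞) Q]
    [MulAction G Q]
    (L : Q × Q → ℝ)
    (hL : ContMDiff (IQ.prod IQ) 𝓘(ℝ, ℝ) (⊤ : ℕ∞) L)
    -- G-regularity: nondegeneracy of D₂D₁L restricted to vertical spaces
    (hGreg : ∀ (q₀ q₁ : Q) (X₀ : TangentSpace IQ q₀),
      X₀ ∈ LinearMap.range (mfderiv IG IQ (fun h : G => h • q₀) (1 : G)).toLinearMap →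
      (∀ X₁ ∈ LinearMap.range (mfderiv IG IQ (fun h : G => h • q₁) (1 : G)).toLinearMap,
        mfderiv IQ 𝓘(ℝ, ℝ)
          (fun y => mfderiv IQ 𝓘(ℝ, ℝ) (fun x => L (x, y)) q₀ X₀) q₁ X₁ = (0 : ℝ))
      → X₀ = 0)
    (Jd : Q × Q → (EG →L[ℝ] ℝ))
    (hJd : ∀ (p : Q × Q) (ξ : TangentSpace IG (1 : G)),
      Jd p ξ = -(mfderiv IQ 𝓘(ℝ, ℝ) (fun x => L (x, p.2)) p.1
        ((mfderiv IG IQ (fun h : G => h • p.1) (1 : G)) ξ)))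
    (q₀ : Q) (q₁ : Q) :
    IsCompl
      (LinearMap.range (mfderiv IG IQ (fun h : G => h • q₁) (1 : G)).toLinearMap)
      (LinearMap.ker (mfderiv IQ 𝓘(ℝ, EG →L[ℝ] ℝ) (fun y => Jd (q₀, y)) q₁).toLinearMap) := by
  have (q : Q) : FiniteDimensional ℝ (TangentSpace IQ q) := ‹FiniteDimensional ℝ EQ›
  have hdiff (p : Q) : MDifferentiable IQ 𝓘(ℝ, EQ →L[ℝ] ℝ) (partialMfderivFst IQ L p) :=
    (hL.contMDiff_partialMfderivFst (m := 1) (WithTop.coe_le_coe.mpr le_top) p).mdifferentiable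
      one_ne_zero
  have hsep (p q : Q) :
      ((mixedMfderiv IQ IQ L p q).toLinearMap₁₂.domRestrict₁₂
        (verticalSpace IQ IG q) (verticalSpace IQ IG p)).SeparatingRight :=
    fun u h => Subtype.ext <| hGreg p q u u.2 fun X hX =>
      (DFunLike.congr_fun ((hdiff p q).mfderiv_clm_apply_const u.1) X).trans (h ⟨X, hX⟩)
  have hJ : ∀ y, Jd (q₀, y) = -(partialMfderivFst IQ L q₀ y).comp
      (mfderiv IG IQ (fun h : G => h • q₀) (1 : G)) := fun y => by
    ext ξ
    exact hJd (q₀, y) ξ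
  exact ker_mfderiv_of_eq_neg_comp hJ (hdiff q₀ q₁) ▸
    LinearMap.isCompl_comap_dualAnnihilator (hsep q₀ q₁) (hsep q₁ q₀).finrank_le

/-- For a horizontal symmetry group `G` with `L` regular and
`G`-regular, for every `q₀ ∈ Q`, `μ ∈ 𝔤*` and `q₁` in the intersection of the
orbit `G·q₀` with the momentum level set `(J_d^{q₀})⁻¹(μ)`, one has
`T_{q₁}Q = T_{q₁}(G·q₀) ⊕ T_{q₁}(J_d^{q₀})⁻¹(μ)`.  The orbit tangent space is
the range of the infinitesimal-generator map `ξ ↦ ξ_Q(q₁)` and the tangent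
space of the level set is the kernel of the differential of `J_d^{q₀}`. -/
theorem orbit_level_set_complementary
    {EG : Type*} [NormedAddCommGroup EG] [NormedSpace ℝ EG]
    [FiniteDimensional ℝ EG]
    {HG : Type*} [TopologicalSpace HG] (IG : ModelWithCorners ℝ EG HG)
    {G : Type*} [TopologicalSpace G] [ChartedSpace HG G] [Group G]
    [LieGroup IG (⊤ : ℕ∞) G]
    {EQ : Type*} [NormedAddCommGroup EQ] [NormedSpace ℝ EQ]
    [FiniteDimensional ℝ EQ]
    {HQ : Type*} [TopologicalSpace HQ] (IQ : ModelWithCorners ℝ EQ HQ)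
    {Q : Type*} [TopologicalSpace Q] [ChartedSpace HQ Q]
    [IsManifold IQ (⊤ : ℕ∞) Q]
    [MulAction G Q]
    (hact : ContMDiff (IG.prod IQ) IQ (⊤ : ℕ∞) (fun p : G × Q => p.1 • p.2))
    (L : Q × Q → ℝ)
    (hL : ContMDiff (IQ.prod IQ) 𝓘(ℝ, ℝ) (⊤ : ℕ∞) L)
    (hinv : ∀ (g : G) (q₀ q₁ : Q), L (g • q₀, g • q₁) = L (q₀, q₁))
    -- regularity
    (hreg : ∀ (q₀ q₁ : Q) (X₀ : TangentSpace IQ q₀),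
      (∀ X₁ : TangentSpace IQ q₁,
        mfderiv IQ 𝓘(ℝ, ℝ)
          (fun y => mfderiv IQ 𝓘(ℝ, ℝ) (fun x => L (x, y)) q₀ X₀) q₁ X₁ = (0 : ℝ))
      → X₀ = 0)
    -- G-regularity: nondegeneracy of D₂D₁L restricted to vertical spaces
    (hGreg : ∀ (q₀ q₁ : Q) (X₀ : TangentSpace IQ q₀),
      X₀ ∈ LinearMap.range (mfderiv IG IQ (fun h : G => h • q₀) (1 : G)).toLinearMap →
      (∀ X₁ ∈ LinearMap.range (mfderiv IG IQ (fun h : G => h • q₁) (1 : G)).toLinearMap,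
        mfderiv IQ 𝓘(ℝ, ℝ)
          (fun y => mfderiv IQ 𝓘(ℝ, ℝ) (fun x => L (x, y)) q₀ X₀) q₁ X₁ = (0 : ℝ))
      → X₀ = 0)
    (Jd : Q × Q → (EG →L[ℝ] ℝ))
    (hJd : ∀ (p : Q × Q) (ξ : TangentSpace IG (1 : G)),
      Jd p ξ = -(mfderiv IQ 𝓘(ℝ, ℝ) (fun x => L (x, p.2)) p.1
        ((mfderiv IG IQ (fun h : G => h • p.1) (1 : G)) ξ)))
    (q₀ : Q) (μ : EG →L[ℝ] ℝ) (q₁ : Q)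
    (horb : q₁ ∈ MulAction.orbit G q₀) (hμ : Jd (q₀, q₁) = μ) :
    IsCompl
      (LinearMap.range (mfderiv IG IQ (fun h : G => h • q₁) (1 : G)).toLinearMap)
      (LinearMap.ker (mfderiv IQ 𝓘(ℝ, EG →L[ℝ] ℝ) (fun y => Jd (q₀, y)) q₁).toLinearMap) :=
  orbit_level_set_complementary_general IG IQ L hL hGreg Jd hJd q₀ q₁
end

section
/- Let G be a group of μ-good symmetries of a regular and G-regular discrete mechanical system, for some μ ∈ 𝔤* satisfying Ad*_g(μ) = μ for all g ∈ G. Then the level set 𝒥_μ := J_d⁻¹(μ) ⊂ Q × Q defines an affine discrete connection on π : Q → Q/G, with level map γ : Q → G determined by J_d(q, γ(q)·q) = μ; in particular γ is G-equivariant for the conjugation action. -/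
/-!
Invariance of `L` and the chain rule give `J_d(g q₀, g q₁) = J_d(q₀, q₁) ∘ Ad_{g⁻¹}`, so by
`Ad*`-invariance of `μ` the level set `J_d⁻¹(μ)` is `G`-invariant; uniqueness in `μ`-goodness then
forces `γ (g q) = g γ(q) g⁻¹`. For transversality, the derivative of `q₁ ↦ J_d(q₀, q₁)` is
`-D₂D₁L(q₀, q₁)` restricted to the orbit directions at `q₀`, so its kernel is the annihilator of
`T(G·q₀)` under the mixed second derivative. `G`-regularity at `(q₀, q₁)` and at `(q₁, q₀)` shows
that `T(G·q₀)` and `T(G·q₁)` have the same dimension and are perfectly paired, and a perfect pairing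
of `W₁` with `W₂` makes `W₁` complementary to the annihilator of `W₂`.
-/

open scoped Manifold
open Function Module LinearMap

theorem LinearMap.isCompl_ker_of_bijective_domRestrict {R E F : Type*} [Ring R]
    [AddCommGroup E] [Module R E] [AddCommGroup F] [Module R F]
    {f : E →ₗ[R] F} {p : Submodule R E} (hf : Bijective (f.domRestrict p)) :
    IsCompl p (ker f) := by
  let e := LinearEquiv.ofBijective _ hf
  have h := isCompl_of_proj (f := e.symm.toLinearMap ∘ₗ f) e.symm_apply_apply
  rwa [LinearEquiv.ker_comp] at h

section Pairing

variable {K V₁ V₂ : Type*} [Field K] [AddCommGroup V₁] [Module K V₁] [AddCommGroup V₂] [Module K V₂]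

theorem LinearMap.finrank_le_of_injective_flip [FiniteDimensional K V₁]
    {B : V₁ →ₗ[K] V₂ →ₗ[K] K} (hB : Injective B.flip) : finrank K V₂ ≤ finrank K V₁ :=
  (finrank_le_finrank_of_injective hB).trans_eq Subspace.dual_finrank_eq

theorem LinearMap.isCompl_comap_dualAnnihilator_s13 {B : V₁ →ₗ[K] V₂ →ₗ[K] K}
    [FiniteDimensional K V₁] [FiniteDimensional K V₂] {W₁ : Submodule K V₁} {W₂ : Submodule K V₂}
    (hB : Injective (B.domRestrict₁₂ W₁ W₂).flip) (hdim : finrank K W₁ ≤ finrank K W₂) :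
    IsCompl W₁ (W₂.dualAnnihilator.comap B) := by
  have hsurj : Surjective (B.domRestrict₁₂ W₁ W₂) := flip_injective_iff₂.mp hB
  have hrank : finrank K W₁ = finrank K (Dual K W₂) :=
    le_antisymm (hdim.trans_eq Subspace.dual_finrank_eq.symm)
      (finrank_le_finrank_of_surjective hsurj)
  have hbij : Bijective (B.domRestrict₁₂ W₁ W₂) :=
    ⟨(injective_iff_surjective_of_finrank_eq_finrank hrank).mpr hsurj, hsurj⟩
  rw [← Submodule.dualRestrict_ker_eq_dualAnnihilator, ← ker_comp]
  exact isCompl_ker_of_bijective_domRestrict hbij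

end Pairing

section MixedDerivative

variable {𝕜 : Type*} [NontriviallyNormedField 𝕜]
  {E : Type*} [NormedAddCommGroup E] [NormedSpace 𝕜 E]
  {H : Type*} [TopologicalSpace H] {I : ModelWithCorners 𝕜 E H}
  {M : Type*} [TopologicalSpace M] [ChartedSpace H M]
  {E' : Type*} [NormedAddCommGroup E'] [NormedSpace 𝕜 E']
  {H' : Type*} [TopologicalSpace H'] {I' : ModelWithCorners 𝕜 E' H'}
  {N : Type*} [TopologicalSpace N] [ChartedSpace H' N]
  {F F' : Type*} [NormedAddCommGroup F] [NormedSpace 𝕜 F] [NormedAddCommGroup F'] [NormedSpace 𝕜 F']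

instance TangentSpace.finiteDimensional [FiniteDimensional 𝕜 E] (x : M) :
    FiniteDimensional 𝕜 (TangentSpace I x) :=
  inferInstanceAs (FiniteDimensional 𝕜 E)

theorem ContinuousLinearMap.comp_mfderiv (c : F →L[𝕜] F') {f : M → F} {x : M}
    (hf : MDifferentiableAt I 𝓘(𝕜, F) f x) :
    mfderiv I 𝓘(𝕜, F') (fun y => c (f y)) x = c.comp (mfderiv I 𝓘(𝕜, F) f x) := by
  have h := mfderiv_comp x c.mdifferentiableAt hf
  rwa [c.mfderiv_eq] at h

theorem inTangentCoordinates_const_eq [IsManifold I 1 M] {X : Type*} (a : M) (g : X → F)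
    (ϕ : X → E →L[𝕜] F) (x₀ : X) :
    inTangentCoordinates I 𝓘(𝕜, F) (fun _ => a) g ϕ x₀ = ϕ := by
  funext x
  rw [inTangentCoordinates_eq _ _ _ (mem_chart_source H a) (by simp [chartAt_self_eq])]
  ext v
  simp only [ContinuousLinearMap.comp_apply, tangentBundleCore_coordChange_model_space,
    (tangentBundleCore I M).coordChange_self (achart H a) a (mem_chart_source H a)]
  rfl

variable (I) in
noncomputable def mfderivFst (f : M × N → F) (a : M) (y : N) : E →L[𝕜] F :=
  mfderiv I 𝓘(𝕜, F) (fun x => f (x, y)) a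

theorem mdifferentiableAt_mfderivFst [IsManifold I 1 M] [IsManifold I' 1 N] {n : WithTop ℕ∞}
    {f : M × N → F} (hf : ContMDiff (I.prod I') 𝓘(𝕜, F) n f) (hn : 2 ≤ n) (a : M) (b : N) :
    MDifferentiableAt I' 𝓘(𝕜, E →L[𝕜] F) (mfderivFst I f a) b := by
  have hswap : ContMDiffAt (I'.prod I) 𝓘(𝕜, F) n (uncurry fun y x => f (x, y)) (b, a) :=
    (hf.comp (contMDiff_snd.prodMk contMDiff_fst)).contMDiffAt
  have h := hswap.mfderiv (fun y x => f (x, y)) (fun _ => a) contMDiffAt_const (m := 1)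
    (by rwa [one_add_one_eq_two])
  erw [inTangentCoordinates_const_eq] at h
  exact h.mdifferentiableAt one_ne_zero

variable (I I') in
/-- The mixed second derivative `D₂D₁f(a, b)`, as a bilinear form on `T_b N × T_a M`. -/
noncomputable def mixedMFDeriv (f : M × N → 𝕜) (a : M) (b : N) :
    TangentSpace I' b →ₗ[𝕜] E →ₗ[𝕜] 𝕜 :=
  ContinuousLinearMap.coeLM 𝕜 ∘ₗ (mfderiv I' 𝓘(𝕜, E →L[𝕜] 𝕜) (mfderivFst I f a) b).toLinearMap

theorem mfderiv_mfderivFst_apply {f : M × N → 𝕜} {a : M} {b : N}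
    (hf : MDifferentiableAt I' 𝓘(𝕜, E →L[𝕜] 𝕜) (mfderivFst I f a) b)
    (X₀ : E) (X₁ : TangentSpace I' b) :
    mfderiv I' 𝓘(𝕜, 𝕜) (fun y => mfderiv I 𝓘(𝕜, 𝕜) (fun x => f (x, y)) a X₀) b X₁ =
      mixedMFDeriv I I' f a b X₁ X₀ :=
  congr($((ContinuousLinearMap.apply 𝕜 𝕜 X₀).comp_mfderiv hf) X₁)

end MixedDerivative

section DiscreteMomentum

variable {EG : Type*} [NormedAddCommGroup EG] [NormedSpace ℝ EG]
  {HG : Type*} [TopologicalSpace HG] {IG : ModelWithCorners ℝ EG HG}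
  {G : Type*} [TopologicalSpace G] [ChartedSpace HG G] [Group G]
  {EQ : Type*} [NormedAddCommGroup EQ] [NormedSpace ℝ EQ]
  {HQ : Type*} [TopologicalSpace HQ] {IQ : ModelWithCorners ℝ EQ HQ}
  {Q : Type*} [TopologicalSpace Q] [ChartedSpace HQ Q] [MulAction G Q]

theorem mfderiv_orbit_smul [ContMDiffMul IG 1 G]
    (hact : MDifferentiable (IG.prod IQ) IQ (fun p : G × Q => p.1 • p.2)) (g : G) (q : Q) :
    mfderiv IG IQ (fun h : G => h • g • q) 1 =
      (mfderiv IQ IQ (g • ·) q).comp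
        ((mfderiv IG IQ (fun h : G => h • q) 1).comp (mfderiv IG IG (fun x => g⁻¹ * x * g) 1)) := by
  have hfactor : (fun h : G => h • g • q) =
      (g • ·) ∘ (fun h : G => h • q) ∘ (fun x => g⁻¹ * x * g) := by
    funext h
    simp [smul_smul, mul_assoc]
  have hconj : MDifferentiableAt IG IG (fun x : G => g⁻¹ * x * g) 1 :=
    ((contMDiff_mul_left.mul contMDiff_const).mdifferentiable one_ne_zero) 1
  have horbit : MDifferentiable IG IQ (fun h : G => h • q) :=
    hact.comp (mdifferentiable_id.prodMk mdifferentiable_const)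
  have hsmul : MDifferentiable IQ IQ (g • · : Q → Q) :=
    hact.comp (mdifferentiable_const.prodMk mdifferentiable_id)
  have hconj_one : g⁻¹ * 1 * g = 1 := by group
  have h₁ : HasMFDerivAt IG IQ (fun h : G => h • q) (g⁻¹ * 1 * g)
      (mfderiv IG IQ (fun h : G => h • q) 1) := by
    rw [hconj_one]; exact (horbit 1).hasMFDerivAt
  have h₂ : HasMFDerivAt IQ IQ (g • ·) (((fun h : G => h • q) ∘ fun x => g⁻¹ * x * g) 1)
      (mfderiv IQ IQ (g • ·) q) := by
    rw [show ((fun h : G => h • q) ∘ fun x => g⁻¹ * x * g) 1 = q by simp]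
    exact (hsmul q).hasMFDerivAt
  rw [hfactor]
  exact (h₂.comp 1 (h₁.comp 1 hconj.hasMFDerivAt)).mfderiv

variable (IG G IQ) in
noncomputable def discreteMomentum (L : Q × Q → ℝ) (p : Q × Q) : EG →L[ℝ] ℝ :=
  -((mfderivFst IQ L p.1 p.2).comp (mfderiv IG IQ (fun h : G => h • p.1) 1))

theorem mfderivFst_smul_apply {L : Q × Q → ℝ} (hL : MDifferentiable (IQ.prod IQ) 𝓘(ℝ, ℝ) L)
    (hinv : ∀ (g : G) (q₀ q₁ : Q), L (g • q₀, g • q₁) = L (q₀, q₁))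
    (hact : MDifferentiable (IG.prod IQ) IQ (fun p : G × Q => p.1 • p.2)) (g : G) (q₀ q₁ : Q)
    (v : TangentSpace IQ q₀) :
    mfderivFst IQ L (g • q₀) (g • q₁) (mfderiv IQ IQ (g • ·) q₀ v) = mfderivFst IQ L q₀ q₁ v := by
  have hfactor : (fun x => L (x, q₁)) = (fun x => L (x, g • q₁)) ∘ (g • ·) :=
    funext fun x => (hinv g x q₁).symm
  have hsmul : MDifferentiable IQ IQ (g • · : Q → Q) :=
    hact.comp (mdifferentiable_const.prodMk mdifferentiable_id)
  have hslice : MDifferentiable IQ 𝓘(ℝ, ℝ) (fun x => L (x, g • q₁)) :=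
    hL.comp (mdifferentiable_id.prodMk mdifferentiable_const)
  rw [mfderivFst, mfderivFst, hfactor]
  exact (mfderiv_comp_apply q₀ (hslice _) (hsmul q₀) v).symm

theorem discreteMomentum_smul_apply [ContMDiffMul IG 1 G] {L : Q × Q → ℝ}
    (hL : MDifferentiable (IQ.prod IQ) 𝓘(ℝ, ℝ) L)
    (hinv : ∀ (g : G) (q₀ q₁ : Q), L (g • q₀, g • q₁) = L (q₀, q₁))
    (hact : MDifferentiable (IG.prod IQ) IQ (fun p : G × Q => p.1 • p.2)) (g : G) (q₀ q₁ : Q)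
    (ξ : TangentSpace IG (1 : G)) :
    discreteMomentum IG G IQ L (g • q₀, g • q₁) ξ =
      discreteMomentum IG G IQ L (q₀, q₁) (mfderiv IG IG (fun x => g⁻¹ * x * g) 1 ξ) := by
  have h := DFunLike.congr_fun (mfderiv_orbit_smul hact g q₀) ξ
  exact (congrArg (fun v => -(mfderivFst IQ L (g • q₀) (g • q₁) v)) h).trans
    (congrArg Neg.neg (mfderivFst_smul_apply hL hinv hact g q₀ q₁ _))

theorem discreteMomentum_smul_eq_of_eq [ContMDiffMul IG 1 G] {L : Q × Q → ℝ}
    (hL : MDifferentiable (IQ.prod IQ) 𝓘(ℝ, ℝ) L)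
    (hinv : ∀ (g : G) (q₀ q₁ : Q), L (g • q₀, g • q₁) = L (q₀, q₁))
    (hact : MDifferentiable (IG.prod IQ) IQ (fun p : G × Q => p.1 • p.2)) {μ : EG →L[ℝ] ℝ}
    (hAdμ : ∀ (g : G) (ξ : TangentSpace IG (1 : G)),
      μ ((mfderiv IG IG (fun x : G => g * x * g⁻¹) (1 : G)) ξ) = μ ξ)
    (g : G) (p : Q × Q) (hp : discreteMomentum IG G IQ L p = μ) :
    discreteMomentum IG G IQ L (g • p.1, g • p.2) = μ := by
  ext ξ
  refine (discreteMomentum_smul_apply hL hinv hact g p.1 p.2 ξ).trans ?_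
  have hAd := hAdμ g⁻¹ ξ
  rw [show (fun x : G => g⁻¹ * x * g⁻¹⁻¹) = (fun x => g⁻¹ * x * g) by simp only [inv_inv]] at hAd
  rw [hp]
  exact hAd

theorem ker_mfderiv_discreteMomentum [IsManifold IQ 1 Q] {n : WithTop ℕ∞} {L : Q × Q → ℝ}
    (hL : ContMDiff (IQ.prod IQ) 𝓘(ℝ, ℝ) n L) (hn : 2 ≤ n) (q₀ q₁ : Q) :
    ker (mfderiv IQ 𝓘(ℝ, EG →L[ℝ] ℝ) (fun y => discreteMomentum IG G IQ L (q₀, y)) q₁).toLinearMap =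
      (range (mfderiv IG IQ (fun h : G => h • q₀) 1).toLinearMap).dualAnnihilator.comap
        (mixedMFDeriv IQ IQ L q₀ q₁) := by
  set A := mfderiv IG IQ (fun h : G => h • q₀) 1
  have hderiv : mfderiv IQ 𝓘(ℝ, EG →L[ℝ] ℝ) (fun y => discreteMomentum IG G IQ L (q₀, y)) q₁ =
      (-(ContinuousLinearMap.compL ℝ EG EQ ℝ).flip A).comp
        (mfderiv IQ 𝓘(ℝ, EQ →L[ℝ] ℝ) (mfderivFst IQ L q₀) q₁) :=
    ContinuousLinearMap.comp_mfderiv (-(ContinuousLinearMap.compL ℝ EG EQ ℝ).flip A)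
      (mdifferentiableAt_mfderivFst hL hn q₀ q₁)
  ext X₁
  rw [mem_ker, ContinuousLinearMap.coe_coe, hderiv]
  refine ⟨fun h => (Submodule.mem_dualAnnihilator _).mpr ?_, fun h => ?_⟩
  · rintro _ ⟨ξ, rfl⟩
    exact neg_eq_zero.mp (congrArg (fun φ : EG →L[ℝ] ℝ => φ ξ) h)
  · refine ContinuousLinearMap.ext fun ξ => ?_
    exact neg_eq_zero.mpr ((Submodule.mem_dualAnnihilator _).mp h _ ⟨ξ, rfl⟩)

end DiscreteMomentum

theorem apply_smul_eq_conj_of_unique {G Q : Type*} [Group G] [MulAction G Q] {S : Set (Q × Q)}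
    (hS : ∀ (g : G) (p : Q × Q), p ∈ S → (g • p.1, g • p.2) ∈ S) {γ : Q → G}
    (hγ : ∀ q, (q, γ q • q) ∈ S) (huniq : ∀ (q : Q) (g : G), (q, g • q) ∈ S → g = γ q)
    (g : G) (q : Q) : γ (g • q) = g * γ q * g⁻¹ := by
  refine (huniq (g • q) _ ?_).symm
  rw [show (g * γ q * g⁻¹) • g • q = g • γ q • q by simp [smul_smul]]
  exact hS g _ (hγ q)

theorem momentum_level_set_affine_discrete_connection_general
    {EG : Type*} [NormedAddCommGroup EG] [NormedSpace ℝ EG]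
    {HG : Type*} [TopologicalSpace HG] (IG : ModelWithCorners ℝ EG HG)
    {G : Type*} [TopologicalSpace G] [ChartedSpace HG G] [Group G]
    [LieGroup IG (⊤ : ℕ∞) G]
    {EQ : Type*} [NormedAddCommGroup EQ] [NormedSpace ℝ EQ]
    [FiniteDimensional ℝ EQ]
    {HQ : Type*} [TopologicalSpace HQ] (IQ : ModelWithCorners ℝ EQ HQ)
    {Q : Type*} [TopologicalSpace Q] [ChartedSpace HQ Q]
    [IsManifold IQ (⊤ : ℕ∞) Q]
    [MulAction G Q]
    (hact : ContMDiff (IG.prod IQ) IQ (⊤ : ℕ∞) (fun p : G × Q => p.1 • p.2))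
    (L : Q × Q → ℝ)
    (hL : ContMDiff (IQ.prod IQ) 𝓘(ℝ, ℝ) (⊤ : ℕ∞) L)
    (hinv : ∀ (g : G) (q₀ q₁ : Q), L (g • q₀, g • q₁) = L (q₀, q₁))
    (hGreg : ∀ (q₀ q₁ : Q) (X₀ : TangentSpace IQ q₀),
      X₀ ∈ LinearMap.range (ContinuousLinearMap.toLinearMap
        (mfderiv IG IQ (fun h : G => h • q₀) (1 : G))) →
      (∀ X₁ ∈ LinearMap.range (ContinuousLinearMap.toLinearMap
        (mfderiv IG IQ (fun h : G => h • q₁) (1 : G))),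
        mfderiv IQ 𝓘(ℝ, ℝ)
          (fun y => mfderiv IQ 𝓘(ℝ, ℝ) (fun x => L (x, y)) q₀ X₀) q₁ X₁ = (0 : ℝ))
      → X₀ = 0)
    (Jd : Q × Q → (EG →L[ℝ] ℝ))
    (hJd : ∀ (p : Q × Q) (ξ : TangentSpace IG (1 : G)),
      Jd p ξ = -(mfderiv IQ 𝓘(ℝ, ℝ) (fun x => L (x, p.2)) p.1
        ((mfderiv IG IQ (fun h : G => h • p.1) (1 : G)) ξ)))
    (μ : EG →L[ℝ] ℝ)
    -- Ad*-invariance of μ: μ ∘ Ad_g = μ for all g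
    (hAdμ : ∀ (g : G) (ξ : TangentSpace IG (1 : G)),
      μ ((mfderiv IG IG (fun x : G => g * x * g⁻¹) (1 : G)) ξ) = μ ξ)
    -- μ-goodness: γ q is the unique g with J_d(q, g·q) = μ
    (γ : Q → G)
    (hγ : ∀ q : Q, Jd (q, γ q • q) = μ)
    (hγuniq : ∀ (q : Q) (g : G), Jd (q, g • q) = μ → g = γ q) :
    -- 𝒥_μ is G-invariant
    (∀ (g : G) (p : Q × Q), Jd p = μ → Jd (g • p.1, g • p.2) = μ)
    -- the graph of the level lies in 𝒥_μ
    ∧ (∀ q : Q, Jd (q, γ q • q) = μ)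
    -- the level is G-equivariant for the conjugation action
    ∧ (∀ (g : G) (q : Q), γ (g • q) = g * γ q * g⁻¹)
    -- transversality of the fibers of 𝒥_μ to the orbits
    ∧ (∀ q₀ q₁ : Q, q₁ ∈ MulAction.orbit G q₀ → Jd (q₀, q₁) = μ →
        IsCompl
          (LinearMap.range (ContinuousLinearMap.toLinearMap
            (mfderiv IG IQ (fun h : G => h • q₁) (1 : G))))
          (LinearMap.ker
            (ContinuousLinearMap.toLinearMap
              (mfderiv IQ 𝓘(ℝ, EG →L[ℝ] ℝ) (fun y => Jd (q₀, y)) q₁)))) := by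
  obtain rfl : Jd = discreteMomentum IG G IQ L := funext fun p => ContinuousLinearMap.ext (hJd p)
  have hn : (2 : WithTop ℕ∞) ≤ (⊤ : ℕ∞) := WithTop.coe_le_coe.mpr le_top
  have hinvariant := discreteMomentum_smul_eq_of_eq (hL.mdifferentiable (by simp)) hinv
    (hact.mdifferentiable (by simp)) hAdμ
  have hnondeg (q₀ q₁ : Q) : Injective ((mixedMFDeriv IQ IQ L q₀ q₁).domRestrict₁₂
      (range (mfderiv IG IQ (fun h : G => h • q₁) 1).toLinearMap)
      (range (mfderiv IG IQ (fun h : G => h • q₀) 1).toLinearMap)).flip := by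
    rw [injective_iff_map_eq_zero]
    rintro ⟨X₀, hX₀⟩ h
    refine Subtype.ext (hGreg q₀ q₁ X₀ hX₀ fun X₁ hX₁ => ?_)
    exact (mfderiv_mfderivFst_apply (mdifferentiableAt_mfderivFst hL hn q₀ q₁) X₀ X₁).trans
      congr($h ⟨X₁, hX₁⟩)
  refine ⟨hinvariant, hγ, apply_smul_eq_conj_of_unique (S := {p | discreteMomentum IG G IQ L p = μ})
    hinvariant hγ hγuniq, fun q₀ q₁ _ _ => ?_⟩
  have hcompl := isCompl_comap_dualAnnihilator_s13 (hnondeg q₀ q₁)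
    (finrank_le_of_injective_flip (hnondeg q₁ q₀))
  exact ker_mfderiv_discreteMomentum (IG := IG) (G := G) hL hn q₀ q₁ ▸ hcompl

/-- If `G` is a group of `μ`-good symmetries of a regular and
`G`-regular discrete system and `Ad*_g(μ) = μ` for all `g`, then the momentum
level set `𝒥_μ = J_d⁻¹(μ)` defines an affine discrete connection on
`π : Q → Q/G` of level `γ` (where `γ(q)` is the unique group element with
`J_d(q, γ(q)·q) = μ`): `𝒥_μ` is `G`-invariant, contains the graph of the
level `γ`, `γ` is `G`-equivariant for the conjugation action, and the
transversality condition holds: at every point `q₁` of the intersection of an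
orbit `G·q₀` with the fiber of `𝒥_μ` over `q₀`, the orbit tangent space and
the tangent space of the fiber are complementary in `T_{q₁}Q`. -/
theorem momentum_level_set_affine_discrete_connection
    {EG : Type*} [NormedAddCommGroup EG] [NormedSpace ℝ EG]
    [FiniteDimensional ℝ EG]
    {HG : Type*} [TopologicalSpace HG] (IG : ModelWithCorners ℝ EG HG)
    {G : Type*} [TopologicalSpace G] [ChartedSpace HG G] [Group G]
    [LieGroup IG (⊤ : ℕ∞) G]
    {EQ : Type*} [NormedAddCommGroup EQ] [NormedSpace ℝ EQ]
    [FiniteDimensional ℝ EQ]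
    {HQ : Type*} [TopologicalSpace HQ] (IQ : ModelWithCorners ℝ EQ HQ)
    {Q : Type*} [TopologicalSpace Q] [ChartedSpace HQ Q]
    [IsManifold IQ (⊤ : ℕ∞) Q]
    [MulAction G Q]
    (hact : ContMDiff (IG.prod IQ) IQ (⊤ : ℕ∞) (fun p : G × Q => p.1 • p.2))
    (L : Q × Q → ℝ)
    (hL : ContMDiff (IQ.prod IQ) 𝓘(ℝ, ℝ) (⊤ : ℕ∞) L)
    (hinv : ∀ (g : G) (q₀ q₁ : Q), L (g • q₀, g • q₁) = L (q₀, q₁))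
    (hreg : ∀ (q₀ q₁ : Q) (X₀ : TangentSpace IQ q₀),
      (∀ X₁ : TangentSpace IQ q₁,
        mfderiv IQ 𝓘(ℝ, ℝ)
          (fun y => mfderiv IQ 𝓘(ℝ, ℝ) (fun x => L (x, y)) q₀ X₀) q₁ X₁ = (0 : ℝ))
      → X₀ = 0)
    (hGreg : ∀ (q₀ q₁ : Q) (X₀ : TangentSpace IQ q₀),
      X₀ ∈ LinearMap.range (ContinuousLinearMap.toLinearMap
        (mfderiv IG IQ (fun h : G => h • q₀) (1 : G))) →
      (∀ X₁ ∈ LinearMap.range (ContinuousLinearMap.toLinearMap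
        (mfderiv IG IQ (fun h : G => h • q₁) (1 : G))),
        mfderiv IQ 𝓘(ℝ, ℝ)
          (fun y => mfderiv IQ 𝓘(ℝ, ℝ) (fun x => L (x, y)) q₀ X₀) q₁ X₁ = (0 : ℝ))
      → X₀ = 0)
    (Jd : Q × Q → (EG →L[ℝ] ℝ))
    (hJd : ∀ (p : Q × Q) (ξ : TangentSpace IG (1 : G)),
      Jd p ξ = -(mfderiv IQ 𝓘(ℝ, ℝ) (fun x => L (x, p.2)) p.1
        ((mfderiv IG IQ (fun h : G => h • p.1) (1 : G)) ξ)))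
    (μ : EG →L[ℝ] ℝ)
    -- Ad*-invariance of μ: μ ∘ Ad_g = μ for all g
    (hAdμ : ∀ (g : G) (ξ : TangentSpace IG (1 : G)),
      μ ((mfderiv IG IG (fun x : G => g * x * g⁻¹) (1 : G)) ξ) = μ ξ)
    -- μ-goodness: γ q is the unique g with J_d(q, g·q) = μ
    (γ : Q → G)
    (hγ : ∀ q : Q, Jd (q, γ q • q) = μ)
    (hγuniq : ∀ (q : Q) (g : G), Jd (q, g • q) = μ → g = γ q) :
    -- 𝒥_μ is G-invariant
    (∀ (g : G) (p : Q × Q), Jd p = μ → Jd (g • p.1, g • p.2) = μ)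
    -- the graph of the level lies in 𝒥_μ
    ∧ (∀ q : Q, Jd (q, γ q • q) = μ)
    -- the level is G-equivariant for the conjugation action
    ∧ (∀ (g : G) (q : Q), γ (g • q) = g * γ q * g⁻¹)
    -- transversality of the fibers of 𝒥_μ to the orbits
    ∧ (∀ q₀ q₁ : Q, q₁ ∈ MulAction.orbit G q₀ → Jd (q₀, q₁) = μ →
        IsCompl
          (LinearMap.range (ContinuousLinearMap.toLinearMap
            (mfderiv IG IQ (fun h : G => h • q₁) (1 : G))))
          (LinearMap.ker
            (ContinuousLinearMap.toLinearMap
              (mfderiv IQ 𝓘(ℝ, EG →L[ℝ] ℝ) (fun y => Jd (q₀, y)) q₁)))) :=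
  momentum_level_set_affine_discrete_connection_general IG IQ hact L hL hinv hGreg Jd hJd μ hAdμ γ
    hγ hγuniq
end

section
/- For the discrete nonholonomic free particle reduced by its horizontal symmetry G = {0}×ℝ at momentum level μ ∈ ℝ, the reduced forced discrete system on Q/G = ℝ² (coordinates r = (r', r'')) has Lagrangian L̆_d(r_k, r_{k+1}) = (m/2)((r'_{k+1}−r'_k)² + (r''_{k+1}−r''_k)² + (μ/m)²), variational constraints 𝒟̆_r = span(∂_{r'} + r'∂_{r''}), kinematic constraints r''_{k+1}−r''_k = ((r'_{k+1})²−(r'_k)²)/2, and vanishing reduced forces; its discrete Lagrange–D'Alembert equations are −(r'_{k+1}−r'_k)+(r'_k−r'_{k-1}) = λ_k r'_k, −(r''_{k+1}−r''_k)+(r''_k−r''_{k-1}) = −λ_k, together with the kinematic constraint. -/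
/-- Discrete Lagrangian of the discretized nonholonomic free particle on ℝ³. -/
noncomputable def partLd19 (m : ℝ) (q₀ q₁ : ℝ × ℝ × ℝ) : ℝ :=
  m / 2 * ((q₁.1 - q₀.1) ^ 2 + (q₁.2.1 - q₀.2.1) ^ 2 + (q₁.2.2 - q₀.2.2) ^ 2)

/-- The reduced discrete Lagrangian on `Q/G = ℝ²` at momentum level `μ`. -/
noncomputable def partLred (m μ : ℝ) (r₀ r₁ : ℝ × ℝ) : ℝ :=
  m / 2 * ((r₁.1 - r₀.1) ^ 2 + (r₁.2 - r₀.2) ^ 2 + (μ / m) ^ 2)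

lemma partLred_eq_partLd19_horizontalLift (m μ : ℝ) (r₀ r₁ : ℝ × ℝ) (z : ℝ) :
    partLred m μ r₀ r₁ = partLd19 m (r₀.1, r₀.2, z) (r₁.1, r₁.2, μ / m + z) := by
  simp only [partLred, partLd19]; ring

lemma partLred_comm (m μ : ℝ) (r₀ r₁ : ℝ × ℝ) : partLred m μ r₀ r₁ = partLred m μ r₁ r₀ := by
  simp only [partLred]; ring

lemma hasFDerivAt_partLred_right (m μ : ℝ) (r₀ p : ℝ × ℝ) :
    HasFDerivAt (partLred m μ r₀)
      ((m * (p.1 - r₀.1)) • ContinuousLinearMap.fst ℝ ℝ ℝ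
        + (m * (p.2 - r₀.2)) • ContinuousLinearMap.snd ℝ ℝ ℝ) p := by
  have h₁ := (hasFDerivAt_fst (𝕜 := ℝ) (p := p)).sub_const r₀.1
  have h₂ := (hasFDerivAt_snd (𝕜 := ℝ) (p := p)).sub_const r₀.2
  refine (((h₁.pow 2).add (h₂.pow 2)).add_const ((μ / m) ^ 2)).const_mul (m / 2)
    |>.congr_fderiv ?_
  ext <;> simp <;> ring

lemma hasFDerivAt_partLred_left (m μ : ℝ) (r₁ p : ℝ × ℝ) :
    HasFDerivAt (fun x => partLred m μ x r₁)
      ((m * (p.1 - r₁.1)) • ContinuousLinearMap.fst ℝ ℝ ℝ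
        + (m * (p.2 - r₁.2)) • ContinuousLinearMap.snd ℝ ℝ ℝ) p := by
  simpa only [partLred_comm m μ _ r₁] using hasFDerivAt_partLred_right m μ r₁ p

lemma fderiv_partLred_add_apply (m μ : ℝ) (r₀ r₁ r₂ v : ℝ × ℝ) :
    (fderiv ℝ (fun x => partLred m μ x r₂) r₁ + fderiv ℝ (partLred m μ r₀) r₁) v
      = m * ((-(r₂.1 - r₁.1) + (r₁.1 - r₀.1)) * v.1
          + (-(r₂.2 - r₁.2) + (r₁.2 - r₀.2)) * v.2) := by
  rw [(hasFDerivAt_partLred_left m μ r₂ r₁).fderiv, (hasFDerivAt_partLred_right m μ r₀ r₁).fderiv]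
  simp only [add_apply, FunLike.coe_smul, Pi.smul_apply,
    ContinuousLinearMap.coe_fst', ContinuousLinearMap.coe_snd', smul_eq_mul]
  ring

/-- For the discrete nonholonomic free particle reduced by its
horizontal symmetry `G = {0}×ℝ` at momentum level `μ`:
(a) the reduced Lagrangian equals `L_d` evaluated on a point over `r₀` and its
`𝒥_μ`-horizontal lift `(r₁', r₁'', μ/m + z)`;
(b) a discrete curve `r_k` in `ℝ²` satisfies the discrete Lagrange–D'Alembert
principle — i.e. `D₁L̆_d(r_k,r_{k+1}) + D₂L̆_d(r_{k-1},r_k)` annihilates the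
variational constraints `𝒟̆ = span(∂_{r'} + r'∂_{r''})` and the kinematic
constraint `r''_{k+1} − r''_k = ((r'_{k+1})² − (r'_k)²)/2` holds — if and only
if there are multipliers `λ_k` with
`−(r'_{k+1}−r'_k)+(r'_k−r'_{k-1}) = λ_k r'_k`,
`−(r''_{k+1}−r''_k)+(r''_k−r''_{k-1}) = −λ_k`, and the kinematic constraint. -/
theorem particle_reduced_dla (m μ : ℝ) (hm : 0 < m) :
    -- (a) the reduced Lagrangian via the horizontal lift
    (∀ (r₀ r₁ : ℝ × ℝ) (z : ℝ),
      partLred m μ r₀ r₁ = partLd19 m (r₀.1, r₀.2, z) (r₁.1, r₁.2, μ / m + z))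
    -- (b) characterization of the discrete Lagrange–D'Alembert equations
    ∧ ∀ r : ℕ → ℝ × ℝ,
      ((∀ k : ℕ,
          (fderiv ℝ (fun x => partLred m μ x (r (k + 2))) (r (k + 1))
              + fderiv ℝ (fun y => partLred m μ (r k) y) (r (k + 1)))
            ((1, (r (k + 1)).1) : ℝ × ℝ) = 0
          ∧ (r (k + 1)).2 - (r k).2 = ((r (k + 1)).1 ^ 2 - (r k).1 ^ 2) / 2)
      ↔ ∃ lam : ℕ → ℝ, ∀ k : ℕ,
          (-((r (k + 2)).1 - (r (k + 1)).1) + ((r (k + 1)).1 - (r k).1)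
              = lam k * (r (k + 1)).1)
          ∧ (-((r (k + 2)).2 - (r (k + 1)).2) + ((r (k + 1)).2 - (r k).2)
              = -(lam k))
          ∧ (r (k + 1)).2 - (r k).2 = ((r (k + 1)).1 ^ 2 - (r k).1 ^ 2) / 2) := by
  refine ⟨partLred_eq_partLd19_horizontalLift m μ, fun r => ?_⟩
  simp only [fderiv_partLred_add_apply, mul_one, mul_eq_zero, hm.ne', false_or]
  constructor
  · intro h
    refine ⟨fun k => (r (k + 2)).2 - (r (k + 1)).2 - ((r (k + 1)).2 - (r k).2), fun k => ?_⟩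
    exact ⟨by linear_combination (h k).1, by ring, (h k).2⟩
  · rintro ⟨lam, h⟩ k
    obtain ⟨h₁, h₂, h₃⟩ := h k
    exact ⟨by rw [h₁, h₂]; ring, h₃⟩
end
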